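/- For every n ≥ 1, let K_n be the n×n×n tensor whose m-th 3-slice (the matrix K_n(·,·,m)) has entries 1 on the (m−1)-st superdiagonal (positions (i, i+m−1)) and 0 elsewhere. Then K_n has border rank n over ℂ (it is the limit of a sequence of tensors of complex rank n, but is not a limit of tensors of smaller rank) and complex tensor rank exactly 2n−1. -/

import Mathlib

open scoped BigOperators
open Matrix

/-- An `n×n×n` tensor with entries in `K`. -/
abbrev Tensor (n : ℕ) (K : Type*) := Fin n × Fin n × Fin n → K

namespace Tensor

variable {n : ℕ} {K : Type*}

section CommRing
variable [CommRing K]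

/-- The right action of a triple of `n×n` matrices on an `n×n×n` tensor:
`(P(g₁,g₂,g₃))_{ijk} = Σ_{a,b,c} P_{abc} g₁(a,i) g₂(b,j) g₃(c,k)`. -/
def act (P : Tensor n K) (g₁ g₂ g₃ : Matrix (Fin n) (Fin n) K) : Tensor n K :=
  fun x => ∑ a, ∑ b, ∑ c, P (a, b, c) * g₁ a x.1 * g₂ b x.2.1 * g₃ c x.2.2

/-- The diagonal tensor `D`, with `D_{iii} = 1` and all other entries `0`. -/
def DT (n : ℕ) (K : Type*) [CommRing K] : Tensor n K :=
  fun x => if x.1 = x.2.1 ∧ x.2.1 = x.2.2 then 1 else 0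

/-- The orbit of the diagonal tensor `D` under `GL(n,K)×GL(n,K)×GL(n,K)`. -/
def orbitD (n : ℕ) (K : Type*) [CommRing K] : Set (Tensor n K) :=
  {P | ∃ g₁ g₂ g₃ : Matrix (Fin n) (Fin n) K,
    IsUnit g₁.det ∧ IsUnit g₂.det ∧ IsUnit g₃.det ∧ P = (DT n K).act g₁ g₂ g₃}

/-- `P` admits a decomposition as a sum of `r` rank-one tensors. -/
def HasRankLE (P : Tensor n K) (r : ℕ) : Prop :=
  ∃ u v w : Fin r → Fin n → K, P = fun x => ∑ l, u l x.1 * v l x.2.1 * w l x.2.2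

/-- The tensor rank of `P`: the smallest `r` such that `P` is a sum of `r` rank-one tensors. -/
noncomputable def rank (P : Tensor n K) : ℕ := sInf {r | P.HasRankLE r}

/-- The three flattenings of `P` to an `n²×n` matrix; the columns of `flatten i P` are
indexed by the `i`-th index of `P`. -/
def flatten (i : Fin 3) (P : Tensor n K) : Matrix (Fin n × Fin n) (Fin n) K :=
  ![Matrix.of fun p a => P (a, p.1, p.2),
    Matrix.of fun p b => P (p.1, b, p.2),
    Matrix.of fun p c => P (p.1, p.2, c)] i

/-- Contraction `P *_i v` of the `i`-th index of `P` against a vector `v`. -/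
def contr (i : Fin 3) (P : Tensor n K) (v : Fin n → K) : Matrix (Fin n) (Fin n) K :=
  ![Matrix.of fun j k => ∑ a, P (a, j, k) * v a,
    Matrix.of fun j k => ∑ b, P (j, b, k) * v b,
    Matrix.of fun j k => ∑ c, P (j, k, c) * v c] i

/-- The `j`-th `i`-slice of `P`, i.e. `P *_i e_j`. -/
def slice (i : Fin 3) (P : Tensor n K) (j : Fin n) : Matrix (Fin n) (Fin n) K :=
  contr i P (Pi.single j 1)

/-- The commutation relations in index `i`:
`(P*_i e_j)·adj(P*_i v)·(P*_i e_k) = (P*_i e_k)·adj(P*_i v)·(P*_i e_j)`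
for all `v` and all `j < k`. -/
def CommRel (i : Fin 3) (P : Tensor n K) : Prop :=
  ∀ (v : Fin n → K) (j k : Fin n), j < k →
    slice i P j * (contr i P v).adjugate * slice i P k
      = slice i P k * (contr i P v).adjugate * slice i P j

/-- The matrix `P *_i x`, where `x` is a vector of indeterminates. -/
noncomputable def contrX (i : Fin 3) (P : Tensor n K) :
    Matrix (Fin n) (Fin n) (MvPolynomial (Fin n) K) :=
  ![Matrix.of fun j k => ∑ a, MvPolynomial.C (P (a, j, k)) * MvPolynomial.X a,
    Matrix.of fun j k => ∑ b, MvPolynomial.C (P (j, b, k)) * MvPolynomial.X b,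
    Matrix.of fun j k => ∑ c, MvPolynomial.C (P (j, k, c)) * MvPolynomial.X c] i

/-- `h_i(P;x) = det (P *_i x)`, a polynomial in the indeterminates `x`. -/
noncomputable def hpoly (i : Fin 3) (P : Tensor n K) : MvPolynomial (Fin n) K :=
  (contrX i P).det

/-- The Hessian matrix of a polynomial in the indeterminates `x`. -/
noncomputable def hess (p : MvPolynomial (Fin n) K) :
    Matrix (Fin n) (Fin n) (MvPolynomial (Fin n) K) :=
  Matrix.of fun a b => MvPolynomial.pderiv a (MvPolynomial.pderiv b p)

/-- `f_i(P;x) = (-1)^(n-1) det (H_x (h_i(P;x)))`. -/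
noncomputable def fpoly (i : Fin 3) (P : Tensor n K) : MvPolynomial (Fin n) K :=
  (-1) ^ (n - 1) * (hess (hpoly i P)).det

/-- Substitution `x ↦ g x` in a polynomial in the indeterminates `x`. -/
noncomputable def substX (g : Matrix (Fin n) (Fin n) K) (p : MvPolynomial (Fin n) K) :
    MvPolynomial (Fin n) K :=
  MvPolynomial.aeval (fun j => ∑ k, MvPolynomial.C (g j k) * MvPolynomial.X k) p

end CommRing

/-- A complex tensor is real when all of its entries are real. -/
def IsReal (P : Tensor n ℂ) : Prop := ∀ x, (P x).im = 0

/-- The inclusion of real tensors into complex tensors. -/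
noncomputable def toC (n : ℕ) : Tensor n ℝ → Tensor n ℂ := fun P x => (P x : ℂ)

/-- The orbit `𝒟(ℝ)` of `D` under `GL(n,ℝ)³`, viewed inside the complex tensors. -/
def orbitDR (n : ℕ) : Set (Tensor n ℂ) := toC n '' orbitD n ℝ

/-- The border rank of `P`: the smallest `r` such that `P` is a limit of tensors of
rank at most `r`. -/
noncomputable def borderRank (P : Tensor n ℂ) : ℕ :=
  sInf {r | P ∈ closure {Q : Tensor n ℂ | Q.HasRankLE r}}

/-- The first nonzero entry of every row of `g` equals `1`. -/
def FirstNonzeroOne (g : Matrix (Fin n) (Fin n) ℂ) : Prop :=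
  ∀ r c : Fin n, g r c ≠ 0 → (∀ c' : Fin n, c' < c → g r c' = 0) → g r c = 1

/-- The first `2k` rows of `g` are non-real and not purely imaginary, and occur in complex
conjugate pairs (row `2j+1` conjugate to row `2j`); the remaining rows are real. -/
def ConjPairStructure (k : ℕ) (g : Matrix (Fin n) (Fin n) ℂ) : Prop :=
  (∀ m m' : Fin n, (m : ℕ) < 2 * k → Even (m : ℕ) → (m' : ℕ) = (m : ℕ) + 1 →
      ∀ c, g m' c = (starRingEnd ℂ) (g m c)) ∧
  (∀ m : Fin n, (m : ℕ) < 2 * k → (∃ c, (g m c).im ≠ 0) ∧ (∃ c, (g m c).re ≠ 0)) ∧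
  (∀ m : Fin n, 2 * k ≤ (m : ℕ) → ∀ c, (g m c).im = 0)

/-- A normalized decomposition `P = D(g₁,g₂,g₃)` exhibiting signature `(n-2k, k)`:
the first nonzero entry of every row of `g₁,g₂` is `1`, and each `gᵢ` has its first `2k`
rows non-real occurring in conjugate pairs, with the remaining rows real. -/
def SigDecomp (P : Tensor n ℂ) (k : ℕ) (g₁ g₂ g₃ : Matrix (Fin n) (Fin n) ℂ) : Prop :=
  2 * k ≤ n ∧ IsUnit g₁.det ∧ IsUnit g₂.det ∧ IsUnit g₃.det ∧
  P = (DT n ℂ).act g₁ g₂ g₃ ∧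
  FirstNonzeroOne g₁ ∧ FirstNonzeroOne g₂ ∧
  ConjPairStructure k g₁ ∧ ConjPairStructure k g₂ ∧ ConjPairStructure k g₃

/-- `P` has signature `(n-2k, k)`: its unique rank-`n` decomposition has exactly `2k`
non-real rank-one summands, occurring in conjugate pairs. -/
def HasSignature (P : Tensor n ℂ) (k : ℕ) : Prop :=
  ∃ g₁ g₂ g₃ : Matrix (Fin n) (Fin n) ℂ, SigDecomp P k g₁ g₂ g₃

/-- Cayley's hyperdeterminant of a `2×2×2` tensor. -/
noncomputable def Delta (P : Tensor 2 ℂ) : ℂ :=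
  (P (0,0,0) ^ 2 * P (1,1,1) ^ 2 + P (0,0,1) ^ 2 * P (1,1,0) ^ 2
    + P (0,1,0) ^ 2 * P (1,0,1) ^ 2 + P (0,1,1) ^ 2 * P (1,0,0) ^ 2)
  - 2 * (P (0,0,0) * P (0,0,1) * P (1,1,0) * P (1,1,1)
    + P (0,0,0) * P (0,1,0) * P (1,0,1) * P (1,1,1)
    + P (0,0,0) * P (0,1,1) * P (1,0,0) * P (1,1,1)
    + P (0,0,1) * P (0,1,0) * P (1,0,1) * P (1,1,0)
    + P (0,0,1) * P (0,1,1) * P (1,1,0) * P (1,0,0)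
    + P (0,1,0) * P (0,1,1) * P (1,0,1) * P (1,0,0))
  + 4 * (P (0,0,0) * P (0,1,1) * P (1,0,1) * P (1,1,0)
    + P (0,0,1) * P (0,1,0) * P (1,0,0) * P (1,1,1))

/-- The Levi-Civita symbol on three indices, `ε₁₂₃ = 1`. -/
noncomputable def eps (i j k : Fin 3) : ℂ :=
  if (i, j, k) = ((0 : Fin 3), (1 : Fin 3), (2 : Fin 3)) ∨ (i, j, k) = (1, 2, 0)
      ∨ (i, j, k) = (2, 0, 1) then 1
  else if (i, j, k) = ((2 : Fin 3), (1 : Fin 3), (0 : Fin 3)) ∨ (i, j, k) = (1, 0, 2)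
      ∨ (i, j, k) = (0, 2, 1) then -1
  else 0

/-- The degree-6 invariant `τ₃` of `3×3×3` tensors, given by a six-fold Levi-Civita
contraction. -/
noncomputable def tau3 (P : Tensor 3 ℂ) : ℂ :=
  ∑ i : Fin 3 × Fin 3 × Fin 3, ∑ j : Fin 3 × Fin 3 × Fin 3, ∑ k : Fin 3 × Fin 3 × Fin 3,
    ∑ l : Fin 3 × Fin 3 × Fin 3, ∑ m : Fin 3 × Fin 3 × Fin 3, ∑ o : Fin 3 × Fin 3 × Fin 3,
      P i * P j * P k * P l * P m * P o *
        eps i.1 j.1 k.1 * eps j.2.1 k.2.1 l.2.1 * eps k.2.2 l.2.2 m.2.2 *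
        eps l.1 m.1 o.1 * eps m.2.1 o.2.1 i.2.1 * eps o.2.2 i.2.2 j.2.2

end Tensor

/-- The tensor `K_n` whose `m`-th 3-slice has `1`s on the `(m-1)`-st superdiagonal and `0`s
elsewhere. -/
noncomputable def Kn (n : ℕ) : Tensor n ℂ :=
  fun x => if (x.2.1 : ℕ) = (x.1 : ℕ) + (x.2.2 : ℕ) then 1 else 0

/-!
The upper bounds come from evaluation at distinct points: with `N` nodes `x_l` and the
inverse `W` of the Vandermonde matrix `(x_l ^ j)`, the rank-`N` tensor
`Σ_l (x_l ^ a) ⊗ W(b, l) ⊗ (x_l ^ c)` has entry `[b = a + c]` whenever `a + c < N`. With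
`N = 2n - 1` this is `K_n` itself. With `N = n` it differs from `K_n` only at entries with
`a + c > b`; multiplying the `(a, b, c)` entry by `ε ^ (a + c - b)` keeps the rank, fixes `K_n`
and sends those entries to `0` as `ε → 0`.

Both lower bounds come from the first 3-slice of `K_n`, which is the identity matrix: its
determinant vanishes on tensors of rank `< n`, hence on their closure. For the rank, the
substitution method discards the last 3-slice together with one rank-one summand, keeping the
earlier slices unitriangular along their superdiagonals; after `n - 1` steps only the first
slice is left, and it still needs `n` summands.
-/

open Filter Topology

namespace Tensor

variable {n r t : ℕ} {K : Type*}

theorem HasRankLE.mul_indices [CommRing K] {P : Tensor n K} (hP : P.HasRankLE r)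
    (α β γ : Fin n → K) : HasRankLE (fun x => α x.1 * β x.2.1 * γ x.2.2 * P x) r := by
  obtain ⟨u, v, w, rfl⟩ := hP
  refine ⟨fun l a => α a * u l a, fun l b => β b * v l b, fun l c => γ c * w l c, ?_⟩
  funext x
  simp only [Finset.mul_sum]
  exact Finset.sum_congr rfl fun l _ => by ring

def UnitSuperdiagSlices [Zero K] [One K] (t : ℕ) (P : Tensor n K) : Prop :=
  ∀ a b m : Fin n, (m : ℕ) < t →
    ((b : ℕ) < a + m → P (a, b, m) = 0) ∧ ((b : ℕ) = a + m → P (a, b, m) = 1)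

section Field

variable [Field K]

theorem HasRankLE.det_slice_eq_zero {P : Tensor n K} (hP : P.HasRankLE r) (hr : r < n)
    (c : Fin n) : (Matrix.of fun a b => P (a, b, c)).det = 0 := by
  obtain ⟨u, v, w, rfl⟩ := hP
  show (Matrix.of fun a b => ∑ l, u l a * v l b * w l c).det = 0
  have hfac : (Matrix.of fun a b => ∑ l, u l a * v l b * w l c)
      = (Matrix.of fun a l => u l a) * Matrix.of fun l b => v l b * w l c := by
    ext a b
    simp only [Matrix.of_apply, Matrix.mul_apply]
    exact Finset.sum_congr rfl fun l _ => by ring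
  by_contra hdet
  have hrank := Matrix.rank_of_isUnit _
    ((Matrix.isUnit_iff_isUnit_det _).mpr (isUnit_iff_ne_zero.mpr hdet))
  have hle := (Matrix.rank_mul_le_left (Matrix.of fun a (l : Fin r) => u l a)
    (Matrix.of fun l b => v l b * w l c)).trans (Matrix.rank_le_card_width _)
  rw [← hfac, hrank] at hle
  simp only [Fintype.card_fin] at hle
  omega

/-- Substitution method: a summand whose third factor is nonzero at `p` is cancelled by
subtracting suitable multiples of the `p`-th 3-slice. -/
theorem HasRankLE.exists_sub_slice {P : Tensor n K} (hP : P.HasRankLE (r + 1)) {a b p : Fin n}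
    (hP₀ : P (a, b, p) ≠ 0) :
    ∃ lam : Fin n → K, HasRankLE (fun x => P x - lam x.2.2 * P (x.1, x.2.1, p)) r := by
  obtain ⟨u, v, w, rfl⟩ := hP
  obtain ⟨i, -, hi⟩ := Finset.exists_ne_zero_of_sum_ne_zero hP₀
  have hwi : w i p ≠ 0 := right_ne_zero_of_mul hi
  refine ⟨fun m => w i m / w i p, fun l => u (i.succAbove l), fun l => v (i.succAbove l),
    fun l m => w (i.succAbove l) m - w i m / w i p * w (i.succAbove l) p, ?_⟩
  funext x
  have hcancel : u i x.1 * v i x.2.1 * (w i x.2.2 - w i x.2.2 / w i p * w i p) = 0 := by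
    rw [div_mul_cancel₀ _ hwi, sub_self, mul_zero]
  simp only [Finset.mul_sum, ← Finset.sum_sub_distrib]
  rw [Fin.sum_univ_succAbove _ i]
  convert zero_add _ using 2
  · rw [← hcancel]; ring
  · ring

theorem UnitSuperdiagSlices.det_slice_zero_eq_one {P : Tensor n K} (hP : P.UnitSuperdiagSlices t)
    (ht : 0 < t) (hn : 0 < n) : (Matrix.of fun a b => P (a, b, ⟨0, hn⟩)).det = 1 := by
  rw [Matrix.det_of_isUpperTriangular]
  · exact Finset.prod_eq_one fun a _ => (hP a a _ ht).2 (by simp)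
  · intro a b hba
    exact (hP a b _ ht).1 (by simpa using hba)

theorem UnitSuperdiagSlices.sub_slice {P : Tensor n K} (hP : P.UnitSuperdiagSlices (t + 1))
    (ht : t < n) (lam : Fin n → K) :
    UnitSuperdiagSlices t fun x => P x - lam x.2.2 * P (x.1, x.2.1, ⟨t, ht⟩) := by
  intro a b m hm
  have hlast : (b : ℕ) < a + t → P (a, b, ⟨t, ht⟩) = 0 := (hP a b ⟨t, ht⟩ (Nat.lt_succ_self t)).1
  dsimp only
  refine ⟨fun hb => ?_, fun hb => ?_⟩
  · rw [(hP a b m (by omega)).1 hb, hlast (by omega), mul_zero, sub_zero]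
  · rw [(hP a b m (by omega)).2 hb, hlast (by omega), mul_zero, sub_zero]

theorem UnitSuperdiagSlices.add_le_succ_of_hasRankLE {P : Tensor n K}
    (hP : P.UnitSuperdiagSlices t) (ht : 1 ≤ t) (htn : t ≤ n) (hr : P.HasRankLE r) :
    n + t ≤ r + 1 := by
  induction t, ht using Nat.le_induction generalizing P r with
  | base =>
    have hdet := hP.det_slice_zero_eq_one one_pos htn
    by_contra! hlt
    exact one_ne_zero (hdet ▸ hr.det_slice_eq_zero (by omega) _)
  | succ t ht ih =>
    have hdiag : P (⟨0, by omega⟩, ⟨t, htn⟩, ⟨t, htn⟩) = 1 := (hP _ _ _ (by simp)).2 (by simp)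
    rcases r with _ | r
    · obtain ⟨u, v, w, rfl⟩ := hr
      simp at hdiag
    obtain ⟨lam, hlam⟩ := hr.exists_sub_slice (hdiag ▸ one_ne_zero)
    have := ih (hP.sub_slice htn lam) (by omega) hlam
    omega

theorem le_of_mem_closure_hasRankLE [TopologicalSpace K] [IsTopologicalRing K] [T2Space K]
    {P : Tensor n K} (hP : P ∈ closure {Q | Q.HasRankLE r}) (c : Fin n)
    (hc : (Matrix.of fun a b => P (a, b, c)).det ≠ 0) : n ≤ r := by
  by_contra! hr
  have hclosed : IsClosed {Q : Tensor n K | (Matrix.of fun a b => Q (a, b, c)).det = 0} :=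
    isClosed_eq (continuous_matrix fun a b => continuous_apply (a, b, c)).matrix_det
      continuous_const
  exact hc (closure_minimal (fun Q hQ => hQ.det_slice_eq_zero hr c) hclosed hP)

end Field

theorem tendsto_rescale_nhdsNE_zero {𝕜 : Type*} [NontriviallyNormedField 𝕜] (Q : Tensor n 𝕜)
    (hQ : ∀ a b c : Fin n, (a : ℕ) + c < b → Q (a, b, c) = 0) :
    Tendsto (fun (ε : 𝕜) (x : Fin n × Fin n × Fin n) =>
        ε ^ (x.1 : ℕ) * (ε ^ (x.2.1 : ℕ))⁻¹ * ε ^ (x.2.2 : ℕ) * Q x) (𝓝[≠] 0)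
      (𝓝 fun x => if (x.2.1 : ℕ) = x.1 + x.2.2 then Q x else 0) := by
  refine tendsto_pi_nhds.2 fun ⟨a, b, c⟩ => ?_
  have hscale : ∀ᶠ ε in 𝓝[≠] (0 : 𝕜), ε ^ (a : ℕ) * (ε ^ (b : ℕ))⁻¹ * ε ^ (c : ℕ) * Q (a, b, c)
      = ε ^ ((a + c : ℕ) - b) * Q (a, b, c) := by
    filter_upwards [self_mem_nhdsWithin] with ε hε
    rcases le_or_gt (b : ℕ) (a + c) with hb | hb
    · rw [pow_sub₀ _ hε hb, pow_add]
      ring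
    · rw [hQ a b c hb, mul_zero, mul_zero]
  have hlim : Tendsto (fun ε : 𝕜 => ε ^ ((a + c : ℕ) - b) * Q (a, b, c)) (𝓝[≠] 0)
      (𝓝 (0 ^ ((a + c : ℕ) - b) * Q (a, b, c))) :=
    (((continuous_pow _).mul continuous_const).tendsto 0).mono_left nhdsWithin_le_nhds
  convert hlim.congr' (EventuallyEq.symm hscale) using 2
  rcases lt_trichotomy ((a : ℕ) + c) b with hb | hb | hb
  · simp [hQ a b c hb]
  · simp [hb]
  · simp [hb.ne, zero_pow (Nat.sub_ne_zero_of_lt hb)]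

end Tensor

theorem exists_hasRankLE_eq_Kn {n N : ℕ} (hN : n ≤ N) :
    ∃ Q : Tensor n ℂ, Q.HasRankLE N ∧
      ∀ a b c : Fin n, (a : ℕ) + c < N → Q (a, b, c) = Kn n (a, b, c) := by
  set V := Matrix.vandermonde fun l : Fin N => ((l : ℕ) : ℂ)
  have hV : V⁻¹ * V = 1 := V.nonsing_inv_mul <| isUnit_iff_ne_zero.mpr <|
    Matrix.det_vandermonde_ne_zero_iff.mpr (Nat.cast_injective.comp Fin.val_injective)
  refine ⟨_, ⟨fun l a => ((l : ℕ) : ℂ) ^ (a : ℕ), fun l b => V⁻¹ (Fin.castLE hN b) l,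
    fun l c => ((l : ℕ) : ℂ) ^ (c : ℕ), rfl⟩, fun a b c hac => ?_⟩
  have hentry := congrFun (congrFun hV (Fin.castLE hN b)) ⟨a + c, hac⟩
  simp only [Matrix.mul_apply, Matrix.one_apply, V, Matrix.vandermonde_apply, Fin.ext_iff,
    Fin.val_castLE] at hentry
  simp only [Kn, ← hentry, pow_add]
  exact Finset.sum_congr rfl fun l _ => by ring

theorem Kn_unitSuperdiagSlices (n : ℕ) : (Kn n).UnitSuperdiagSlices n := by
  intro a b m _
  refine ⟨fun hb => ?_, fun hb => ?_⟩ <;> simp only [Kn] <;> split_ifs <;> first | rfl | omega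

theorem Kn_hasRankLE_two_mul_sub_one (n : ℕ) : (Kn n).HasRankLE (2 * n - 1) := by
  obtain ⟨Q, hQr, hQ⟩ := exists_hasRankLE_eq_Kn (by omega : n ≤ 2 * n - 1)
  have hQK : Q = Kn n := funext fun ⟨a, b, c⟩ => hQ a b c (by omega)
  exact hQK ▸ hQr

theorem two_mul_sub_one_le_of_Kn_hasRankLE {n r : ℕ} (hr : (Kn n).HasRankLE r) :
    2 * n - 1 ≤ r := by
  rcases n.eq_zero_or_pos with rfl | hn
  · exact Nat.zero_le r
  have := (Kn_unitSuperdiagSlices n).add_le_succ_of_hasRankLE hn le_rfl hr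
  omega

theorem Kn_mem_closure_hasRankLE (n : ℕ) : Kn n ∈ closure {Q : Tensor n ℂ | Q.HasRankLE n} := by
  obtain ⟨Q, hQr, hQ⟩ := exists_hasRankLE_eq_Kn le_rfl
  have hlim : (fun x : Fin n × Fin n × Fin n =>
      if (x.2.1 : ℕ) = x.1 + x.2.2 then Q x else 0) = Kn n := by
    funext ⟨a, b, c⟩
    split_ifs with hb
    · exact hQ a b c (hb ▸ b.isLt)
    · simp [Kn, hb]
  refine mem_closure_of_tendsto (hlim ▸ Tensor.tendsto_rescale_nhdsNE_zero Q fun a b c hb => ?_)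
    (Eventually.of_forall fun ε => hQr.mul_indices (fun a => ε ^ (a : ℕ))
      (fun b => (ε ^ (b : ℕ))⁻¹) fun c => ε ^ (c : ℕ))
  rw [hQ a b c (hb.trans b.isLt)]
  simp [Kn, hb.ne']

theorem le_of_Kn_mem_closure {n r : ℕ} (h : Kn n ∈ closure {Q : Tensor n ℂ | Q.HasRankLE r}) :
    n ≤ r := by
  rcases n.eq_zero_or_pos with rfl | hn
  · exact Nat.zero_le r
  refine Tensor.le_of_mem_closure_hasRankLE h ⟨0, hn⟩ ?_
  rw [(Kn_unitSuperdiagSlices n).det_slice_zero_eq_one hn hn]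
  exact one_ne_zero

theorem statement_19_general (n : ℕ) :
    Tensor.borderRank (Kn n) = n ∧ Tensor.rank (Kn n) = 2 * n - 1 :=
  ⟨IsLeast.csInf_eq ⟨Kn_mem_closure_hasRankLE n, fun _ => le_of_Kn_mem_closure⟩,
    IsLeast.csInf_eq
      ⟨Kn_hasRankLE_two_mul_sub_one n, fun _ => two_mul_sub_one_le_of_Kn_hasRankLE⟩⟩

/-- `K_n` has border rank `n` and complex tensor rank exactly `2n-1`. -/
theorem statement_19 (n : ℕ) (hn : 1 ≤ n) :
    Tensor.borderRank (Kn n) = n ∧ Tensor.rank (Kn n) = 2 * n - 1 :=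
  statement_19_general n
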